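/- arXiv:2009.12066 — 6 statements merged into one kernel-verified Lean document; each statement's English description precedes it below -/
import Mathlib

section
/- If u, v, w are three vertices of a tree T with {u,v} and {v,w} edges of T, then 2·f_T(v) − f_T(u) − f_T(w) > 0, where f_T(x) denotes the number of subtrees of T containing x. -/
/-!
A subtree through `w` avoiding `v` also avoids `u`, since the unique `u`–`w` path runs through
`v`; adding `v` to it gives a subtree through `v` avoiding `u`, and this injection misses `{v}`.
Hence `#{S ∋ u, v} + #{S ∋ w, S ∌ v} < f(v)`. Adding the same inequality with `u` and `w`
exchanged, and splitting `f(u)` and `f(w)` according to whether the subtree contains `v`, gives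
`f(u) + f(w) < 2 f(v)`.
-/

open SimpleGraph Finset

/-- `numSubtrees G x` is the number of subtrees (nonempty connected subgraphs, identified with
their vertex sets) of the tree `G` containing the vertex `x`. -/
noncomputable def numSubtrees {V : Type*} (G : SimpleGraph V) (x : V) : ℕ :=
  {S : Finset V | x ∈ S ∧ (G.induce (S : Set V)).Connected}.ncard

namespace SimpleGraph

variable {V : Type*} {G : SimpleGraph V}

lemma connected_induce_insert_of_adj {s : Set V} {a b : V} (hs : (G.induce s).Connected)
    (ha : a ∈ s) (hba : G.Adj b a) : (G.induce (insert b s)).Connected := by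
  rw [Set.insert_eq]
  exact connected_induce_union (by simp) hs.preconnected rfl ha hba

lemma IsAcyclic.support_subset_of_connected_induce (hG : G.IsAcyclic) {s : Set V}
    (hs : (G.induce s).Connected) {a b : V} (ha : a ∈ s) (hb : b ∈ s) (p : G.Path a b) :
    ∀ x ∈ p.1.support, x ∈ s := by
  classical
  obtain ⟨q⟩ := hs.preconnected ⟨a, ha⟩ ⟨b, hb⟩
  set r := q.map (Embedding.induce s).toHom
  rw [(hG.subsingleton_path a b).elim p r.toPath]
  intro x hx
  have hx' := Walk.support_toPath_subset_support r hx
  rw [Walk.support_map] at hx'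
  obtain ⟨y, -, rfl⟩ := List.mem_map.1 hx'
  exact y.2

lemma IsAcyclic.mem_of_connected_induce_of_adj_of_adj (hG : G.IsAcyclic) {s : Set V}
    (hs : (G.induce s).Connected) {u v w : V} (huw : u ≠ w) (huv : G.Adj u v)
    (hvw : G.Adj v w) (hu : u ∈ s) (hw : w ∈ s) : v ∈ s := by
  have hp : (Walk.cons huv (Walk.cons hvw Walk.nil)).IsPath := by
    simp [Walk.isPath_def, huv.ne, hvw.ne, huw]
  exact hG.support_subset_of_connected_induce hs hu hw ⟨_, hp⟩ v (by simp)

def subtreesThrough (G : SimpleGraph V) (x : V) : Set (Finset V) :=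
  {S | x ∈ S ∧ (G.induce (S : Set V)).Connected}

lemma subtreesThrough_inter_comm (x y : V) :
    subtreesThrough G x ∩ {S | y ∈ S} = subtreesThrough G y ∩ {S | x ∈ S} := by
  ext S
  simp only [subtreesThrough, Set.mem_inter_iff, Set.mem_ofPred_eq]
  tauto

lemma numSubtrees_eq_ncard_inter_add_ncard_diff [Finite V] (x y : V) :
    numSubtrees G x =
      (subtreesThrough G x ∩ {S | y ∈ S}).ncard + (subtreesThrough G x \ {S | y ∈ S}).ncard :=
  (Set.ncard_inter_add_ncard_sdiff_eq_ncard _ _).symm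

lemma ncard_subtreesThrough_diff_lt [Finite V] [DecidableEq V] (hG : G.IsAcyclic) {u v w : V}
    (huw : u ≠ w) (huv : G.Adj u v) (hvw : G.Adj v w) :
    (subtreesThrough G w \ {S | v ∈ S}).ncard < (subtreesThrough G v \ {S | u ∈ S}).ncard := by
  set A := subtreesThrough G w \ {S | v ∈ S}
  have hinj : Set.InjOn (insert v) A := fun S hS T hT hST => by
    simpa [Finset.erase_insert hS.2, Finset.erase_insert hT.2] using congrArg (·.erase v) hST
  have hmaps : insert v '' A ⊆ subtreesThrough G v \ {S | u ∈ S} := by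
    rintro _ ⟨S, ⟨⟨hw, hS⟩, hv⟩, rfl⟩
    have hu : u ∉ S := fun hu =>
      hv (hG.mem_of_connected_induce_of_adj_of_adj hS huw huv hvw hu hw)
    refine ⟨⟨mem_insert_self v S, ?_⟩, ?_⟩
    · rw [coe_insert]
      exact connected_induce_insert_of_adj hS hw hvw
    · simpa [huv.ne] using hu
  have hsingleton : {v} ∉ insert v '' A := by
    rintro ⟨S, ⟨⟨hw, -⟩, -⟩, hS⟩
    exact hvw.ne' (mem_singleton.1 (hS ▸ mem_insert_of_mem hw))
  calc A.ncard = (insert v '' A).ncard := hinj.ncard_image.symm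
    _ < _ := by
      refine Set.ncard_lt_ncard <|
        (Set.ssubset_iff_of_subset hmaps).2 ⟨{v}, ⟨⟨?_, ?_⟩, ?_⟩, hsingleton⟩
      · exact mem_singleton_self v
      · rw [coe_singleton, induce_singleton_eq_top]
        exact connected_top
      · simpa using huv.ne

end SimpleGraph

/-- If `u, v, w` are three vertices of a tree `T` with `{u,v}` and `{v,w}` edges of `T`, then
`2·f_T(v) − f_T(u) − f_T(w) > 0`. -/
theorem subtree_count_strictly_concave {V : Type*} [Fintype V] (G : SimpleGraph V)
    (hT : G.IsTree) {u v w : V} (huw : u ≠ w) (huv : G.Adj u v) (hvw : G.Adj v w) :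
    numSubtrees G u + numSubtrees G w < 2 * numSubtrees G v := by
  classical
  have hu := ncard_subtreesThrough_diff_lt hT.isAcyclic huw huv hvw
  have hw := ncard_subtreesThrough_diff_lt hT.isAcyclic huw.symm hvw.symm huv.symm
  rw [two_mul, numSubtrees_eq_ncard_inter_add_ncard_diff u v,
    numSubtrees_eq_ncard_inter_add_ncard_diff w v, subtreesThrough_inter_comm u v,
    subtreesThrough_inter_comm w v]
  nth_rewrite 1 [numSubtrees_eq_ncard_inter_add_ncard_diff v u]
  rw [numSubtrees_eq_ncard_inter_add_ncard_diff v w]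
  omega
end

section
/- The subtree core of a tree consists of either a single vertex or two adjacent vertices. -/
open SimpleGraph Finset

/-- The subtree core of `G`: the set of vertices contained in the maximum number of subtrees. -/
noncomputable def subtreeCore {V : Type*} (G : SimpleGraph V) : Set V :=
  {v | ∀ u, numSubtrees G u ≤ numSubtrees G v}

/-!
Write `f = numSubtrees G`. Since `f u` counts the subtrees through `u` avoiding `v` plus those
through both, `f v ≤ f u` compares the subtrees through `v` avoiding `u` with those through `u`
avoiding `v`. For a path `u - v - w` in a tree, adding `v` to a subtree through `u` avoiding `v`
yields a subtree through `v` avoiding `w`, injectively and never `{v}`; combining this with the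
symmetric count gives `min (f u) (f w) < f v`. Hence, walking along the path between two
maximizers of `f`, the value drops after the first step and keeps dropping, so two maximizers
must be adjacent; and a tree has no triangles.
-/

namespace SimpleGraph

variable {V : Type*} {G : SimpleGraph V}

theorem Connected.induce_insert {s : Set V} (hs : (G.induce s).Connected) {u v : V} (hu : u ∈ s)
    (hvu : G.Adj v u) : (G.induce (insert v s)).Connected := by
  rw [Set.insert_eq]
  refine connected_induce_union ?_ hs.preconnected (Set.mem_singleton v) hu hvu
  rw [induce_singleton_eq_top]
  exact preconnected_top

theorem IsAcyclic.mem_of_connected_induce (hG : G.IsAcyclic) {s : Set V}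
    (hs : (G.induce s).Connected) {u v w : V} (huv : G.Adj u v) (hvw : G.Adj v w) (huw : u ≠ w)
    (hu : u ∈ s) (hw : w ∈ s) : v ∈ s := by
  obtain ⟨q, hq⟩ := (hs.preconnected ⟨u, hu⟩ ⟨w, hw⟩).exists_isPath
  by_contra hv
  have hvq : v ∉ (q.map (Embedding.induce s).toHom).support := by
    rw [Walk.support_map, List.mem_map]
    rintro ⟨x, -, rfl⟩
    exact hv x.2
  have huv_path : (Walk.cons huv Walk.nil).IsPath := by simp [huv.ne]
  have hw_mem := hG.mem_support_of_ne_mem_support_of_adj_of_isPath huv_path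
    (hq.map (Embedding.induce (G := G) s).injective) hvw hvq
  simp only [Walk.support_cons, Walk.support_nil, List.mem_cons,
    List.not_mem_nil, or_false] at hw_mem
  exact hw_mem.elim (huw ∘ Eq.symm) hvw.ne'

section LocalMaxima

variable {α : Type*} [LinearOrder α] {f : V → α}

theorem lt_of_isPath_cons
    (hf : ∀ ⦃u v w⦄, G.Adj u v → G.Adj v w → u ≠ w → min (f u) (f w) < f v) {a b y : V} (hab : G.Adj a b) (p : G.Walk b y) (hp : (Walk.cons hab p).IsPath)
    (hba : f b < f a) : f y < f a := by
  induction p generalizing a with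
  | nil => exact hba
  | @cons b c y hbc q ih =>
    have hac : a ≠ c := by
      intro hac
      subst hac
      simp [Walk.cons_isPath_iff] at hp
    have hcb : f c < f b := (min_lt_iff.1 (hf hab hbc hac)).resolve_left hba.not_gt
    exact (ih hbc ((Walk.cons_isPath_iff _ _).1 hp).1 hcb).trans hba

theorem Preconnected.adj_of_forall_le (hG : G.Preconnected)
    (hf : ∀ ⦃u v w⦄, G.Adj u v → G.Adj v w → u ≠ w → min (f u) (f w) < f v)
    {x y : V} (hx : ∀ z, f z ≤ f x) (hy : ∀ z, f z ≤ f y) (hxy : x ≠ y) : G.Adj x y := by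
  obtain ⟨p, hp⟩ := (hG x y).exists_isPath
  match p, hp with
  | .nil, _ => exact absurd rfl hxy
  | .cons hxb .nil, _ => exact hxb
  | .cons (v := b) hxb (.cons (v := c) hbc q), hp =>
    have hxc : x ≠ c := by
      intro hxc
      subst hxc
      simp [Walk.cons_isPath_iff] at hp
    have hcb : f c < f b := (min_lt_iff.1 (hf hxb hbc hxc)).resolve_left (hx b).not_gt
    exact absurd (hy b) (lt_of_isPath_cons hf hbc q ((Walk.cons_isPath_iff _ _).1 hp).1 hcb).not_ge

end LocalMaxima

theorem IsClique.eq_singleton_or_eq_pair {s : Set V} (hG : G.CliqueFree 3) (hs : G.IsClique s)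
    (hne : s.Nonempty) : (∃ v, s = {v}) ∨ ∃ v w, G.Adj v w ∧ s = {v, w} := by
  classical
  obtain ⟨v, hv⟩ := hne
  by_cases hsub : s ⊆ {v}
  · exact Or.inl ⟨v, Set.Subset.antisymm hsub (Set.singleton_subset_iff.2 hv)⟩
  obtain ⟨w, hw, hwv⟩ := Set.not_subset.1 hsub
  refine Or.inr ⟨v, w, hs hv hw (Ne.symm hwv), Set.Subset.antisymm (fun u hu => ?_) ?_⟩
  · by_contra hu'
    simp only [Set.mem_insert_iff, Set.mem_singleton_iff, not_or] at hu'
    apply hG {v, w, u}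
    exact is3Clique_triple_iff.2 ⟨hs hv hw (Ne.symm hwv), hs hv hu (Ne.symm hu'.1),
      hs hw hu (Ne.symm hu'.2)⟩
  · exact Set.insert_subset hv (Set.singleton_subset_iff.2 hw)

end SimpleGraph

section Subtrees

variable {V : Type*}

def subtreesAvoiding (G : SimpleGraph V) (a b : V) : Set (Finset V) :=
  {S | a ∈ S ∧ b ∉ S ∧ (G.induce (S : Set V)).Connected}

variable [Finite V] {G : SimpleGraph V}

theorem numSubtrees_eq_ncard_subtreesAvoiding_add (u v : V) :
    numSubtrees G u = (subtreesAvoiding G u v).ncard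
      + {S : Finset V | ({u, v} : Set V) ⊆ S ∧ (G.induce (S : Set V)).Connected}.ncard := by
  rw [numSubtrees, ← Set.ncard_union_eq]
  · congr 1
    ext S
    simp only [subtreesAvoiding, Set.insert_subset_iff, Set.singleton_subset_iff,
      Finset.mem_coe, Set.mem_ofPred_eq, Set.mem_union]
    tauto
  · rw [Set.disjoint_left]
    exact fun S hS hS' => hS.2.1 (hS'.1 (by simp))

theorem numSubtrees_le_numSubtrees_iff (u v : V) :
    numSubtrees G v ≤ numSubtrees G u ↔
      (subtreesAvoiding G v u).ncard ≤ (subtreesAvoiding G u v).ncard := by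
  rw [numSubtrees_eq_ncard_subtreesAvoiding_add u v,
    numSubtrees_eq_ncard_subtreesAvoiding_add v u, Set.pair_comm, Nat.add_le_add_iff_right]

theorem ncard_subtreesAvoiding_lt (hG : G.IsAcyclic) {u v w : V} (huv : G.Adj u v)
    (hvw : G.Adj v w) (huw : u ≠ w) :
    (subtreesAvoiding G u v).ncard < (subtreesAvoiding G v w).ncard := by
  classical
  have hinj : Set.InjOn (insert v) (subtreesAvoiding G u v) := fun S hS T hT hST => by
    rw [← Finset.erase_insert hS.2.1, hST, Finset.erase_insert hT.2.1]
  have hmaps : insert v '' subtreesAvoiding G u v ⊆ subtreesAvoiding G v w := by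
    rintro _ ⟨S, ⟨hu, hv, hS⟩, rfl⟩
    have hS' : (G.induce (insert v S : Finset V)).Connected := by
      rw [Finset.coe_insert]
      exact hS.induce_insert hu huv.symm
    refine ⟨Finset.mem_insert_self v S, fun hw => ?_, hS'⟩
    rcases Finset.mem_insert.1 hw with hwv | hw
    · exact hvw.ne' hwv
    · exact hv (hG.mem_of_connected_induce hS huv hvw huw hu hw)
  have hsingleton : {v} ∈ subtreesAvoiding G v w \ insert v '' subtreesAvoiding G u v := by
    refine ⟨⟨Finset.mem_singleton_self v, by simpa using hvw.ne', ?_⟩, ?_⟩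
    · rw [Finset.coe_singleton, SimpleGraph.induce_singleton_eq_top]
      exact connected_top
    · rintro ⟨S, ⟨hu, -⟩, hSv⟩
      have : u ∈ ({v} : Finset V) := hSv ▸ Finset.mem_insert_of_mem hu
      exact huv.ne (Finset.mem_singleton.1 this)
  calc (subtreesAvoiding G u v).ncard = (insert v '' subtreesAvoiding G u v).ncard :=
        hinj.ncard_image.symm
    _ < (subtreesAvoiding G v w).ncard :=
        Set.ncard_lt_ncard ((Set.ssubset_iff_of_subset hmaps).2 ⟨_, hsingleton⟩)

theorem min_numSubtrees_lt (hG : G.IsAcyclic) {u v w : V} (huv : G.Adj u v) (hvw : G.Adj v w)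
    (huw : u ≠ w) : min (numSubtrees G u) (numSubtrees G w) < numSubtrees G v := by
  by_contra! hle
  have hu_le := (numSubtrees_le_numSubtrees_iff u v).1 (hle.trans (min_le_left _ _))
  have hw_le := (numSubtrees_le_numSubtrees_iff w v).1 (hle.trans (min_le_right _ _))
  have hu_lt := ncard_subtreesAvoiding_lt hG huv hvw huw
  have hw_lt := ncard_subtreesAvoiding_lt hG hvw.symm huv.symm huw.symm
  omega

end Subtrees

/-- The subtree core of a tree consists of either a single vertex or two adjacent vertices. -/
theorem subtreeCore_single_or_two_adjacent {V : Type*} [Fintype V] (G : SimpleGraph V)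
    (hT : G.IsTree) :
    (∃ v, subtreeCore G = {v}) ∨ (∃ v w, G.Adj v w ∧ subtreeCore G = {v, w}) := by
  have : Nonempty V := hT.connected.nonempty
  have hne : (subtreeCore G).Nonempty := Finite.exists_max (numSubtrees G)
  have hclique : G.IsClique (subtreeCore G) := fun _ hx _ hy hxy =>
    hT.connected.preconnected.adj_of_forall_le (fun _ _ _ => min_numSubtrees_lt hT.isAcyclic)
      hx hy hxy
  exact hclique.eq_singleton_or_eq_pair (hT.isAcyclic.cliqueFree le_rfl) hne
end

section
/- Let T be a tree and e = {u,v} an edge of T. Then |V(T_e(u))| > |V(T_e(v))| if and only if the centroid C_d(T) is contained in V(T_e(u)), where T_e(u) denotes the component of T − e containing u. -/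
open SimpleGraph Finset

/-- For an edge `{u,v}` of a tree `G`, the vertex set of the component `T_e(u)` of `G - e`
containing `u`: the vertices strictly closer to `u` than to `v`. -/
def sideOf {V : Type*} (G : SimpleGraph V) (u v : V) : Set V :=
  {w | G.dist w u < G.dist w v}

/-- Number of vertices of the branch of `G` at `v` towards its neighbour `u`. -/
noncomputable def branchSize {V : Type*} [Fintype V] (G : SimpleGraph V) (v u : V) : ℕ :=
  (Finset.univ.filter (fun w => G.dist w u < G.dist w v)).card

/-- The weight of a vertex `v`: the maximum number of edges of a branch of the tree at `v`. -/
noncomputable def weight {V : Type*} [Fintype V] (G : SimpleGraph V) [DecidableRel G.Adj]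
    (v : V) : ℕ :=
  (G.neighborFinset v).sup (fun u => branchSize G v u)

/-- The centroid of a tree: the set of vertices of minimum weight. -/
noncomputable def centroid {V : Type*} [Fintype V] (G : SimpleGraph V) [DecidableRel G.Adj] :
    Set V :=
  {v | ∀ u, weight G v ≤ weight G u}

/-! Write `A = sideOf G u v` and `B = sideOf G v u`. Every `c ∈ B` has a branch containing all
of `A`, namely the one towards `u`, so `|A| ≤ weight c`; the branches at `u` are `B` and subsets
of `A \ {u}`, so `weight u ≤ max |B| (|A| - 1)`. Thus `|B| < |A|` makes every vertex of `B`
heavier than `u`. Conversely, if `|A| < |B|` the centroid lies in `B`, and if `|A| = |B|` the same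
two bounds show that `v` is a centroid vertex. -/

namespace SimpleGraph

variable {V : Type*} {G : SimpleGraph V}

theorem IsAcyclic.length_eq_dist_of_isPath (hG : G.IsAcyclic) {u v : V} {p : G.Walk u v}
    (hp : p.IsPath) : p.length = G.dist u v := by
  obtain ⟨q, hq, hlen⟩ := p.reachable.exists_path_of_dist
  rw [← hlen, Subtype.mk.inj ((hG.subsingleton_path u v).elim ⟨p, hp⟩ ⟨q, hq⟩)]

theorem IsAcyclic.mem_support_of_adj_of_dist_lt (hG : G.IsAcyclic) {w y t : V}
    {p : G.Walk w y} (hp : p.IsPath) (hyt : G.Adj y t) (ht : G.dist w t < G.dist w y) :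
    t ∈ p.support := by
  by_contra hnot
  have := hG.length_eq_dist_of_isPath (hp.concat hnot hyt)
  rw [Walk.length_concat, hG.length_eq_dist_of_isPath hp] at this
  omega

theorem Connected.exists_adj_dist_add_one_eq (hG : G.Connected) {x z : V} (hxz : x ≠ z) :
    ∃ y, G.Adj x y ∧ G.dist y z + 1 = G.dist x z := by
  obtain ⟨p, hp⟩ := hG.exists_walk_length_eq_dist x z
  cases p with
  | nil => exact absurd rfl hxz
  | @cons _ y _ hxy q =>
    refine ⟨y, hxy, le_antisymm ?_ ?_⟩
    · rw [← hp, Walk.length_cons]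
      exact Nat.succ_le_succ (dist_le q)
    · calc G.dist x z ≤ G.dist x y + G.dist y z := hG.dist_triangle
        _ = G.dist y z + 1 := by rw [dist_eq_one_iff_adj.mpr hxy, add_comm]

theorem IsTree.sideOf_subset_sideOf_of_adj (hT : G.IsTree) {x y z : V} (hxy : G.Adj x y)
    (hyz : G.Adj y z) (hxz : x ≠ z) : sideOf G z y ⊆ sideOf G y x := by
  intro w (hw : G.dist w z < G.dist w y)
  show G.dist w y < G.dist w x
  rcases hT.dist_eq_dist_add_one_of_adj w hxy with h | h
  · omega
  -- otherwise `x` and `z` are both the penultimate vertex of the path from `w` to `y`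
  have hG : G.IsAcyclic := hT.isAcyclic
  obtain ⟨p, hp, -⟩ := (hT.connected w y).exists_path_of_dist
  have hx := hG.mem_support_of_adj_of_dist_lt hp hxy.symm (by omega)
  have hz := hG.mem_support_of_adj_of_dist_lt hp hyz hw
  exact absurd ((hG.eq_penultimate_of_adj_end hp hxy.symm hx).trans
    (hG.eq_penultimate_of_adj_end hp hyz hz).symm) hxz

@[simp]
theorem mem_sideOf {u v w : V} : w ∈ sideOf G u v ↔ G.dist w u < G.dist w v := Iff.rfl

theorem left_mem_sideOf {u v : V} (huv : G.Adj u v) : u ∈ sideOf G u v := by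
  simp [dist_eq_one_iff_adj.mpr huv]

theorem right_notMem_sideOf {u v : V} : v ∉ sideOf G u v := by
  simp

theorem IsTree.mem_sideOf_or_mem_sideOf (hT : G.IsTree) {u v : V} (huv : G.Adj u v) (w : V) :
    w ∈ sideOf G u v ∨ w ∈ sideOf G v u := by
  rcases hT.dist_eq_dist_add_one_of_adj w huv with h | h <;> simp [h]

theorem IsTree.sideOf_subset_sideOf (hT : G.IsTree) {u v c y : V} (huv : G.Adj u v)
    (hcy : G.Adj c y) (hc : c ∈ sideOf G v u) (hu : u ∈ sideOf G y c) :
    sideOf G u v ⊆ sideOf G y c := by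
  -- the neighbour `y` of `c` towards `u` is also its neighbour towards `v`, and lies on the side of `v`
  induction hn : G.dist c v using Nat.strong_induction_on generalizing c y with
  | _ n ih =>
  rw [mem_sideOf] at hc hu
  by_cases hcv : c = v
  · subst hcv
    have : G.dist u y = 0 := by rw [dist_eq_one_iff_adj.mpr huv] at hu; omega
    rw [hT.connected.dist_eq_zero_iff.mp this]
  obtain ⟨y', hcy', hy'v⟩ := hT.connected.exists_adj_dist_add_one_eq hcv
  have hy'u : G.dist u y' < G.dist u c := by
    have := hT.dist_eq_dist_add_one_of_adj c huv
    have := hT.dist_eq_dist_add_one_of_adj y' huv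
    have := hT.dist_eq_dist_add_one_of_adj u hcy'
    rw [dist_comm (u := u) (v := y'), dist_comm (u := u) (v := c)] at *
    omega
  obtain rfl : y = y' := by
    by_contra hne
    have := hT.sideOf_subset_sideOf_of_adj hcy'.symm hcy (Ne.symm hne) hu
    rw [mem_sideOf] at this
    omega
  have hyB : G.dist y v < G.dist y u := by
    have := hT.dist_eq_dist_add_one_of_adj c huv
    have := hT.dist_eq_dist_add_one_of_adj u hcy
    rw [dist_comm (u := u) (v := y), dist_comm (u := u) (v := c)] at *
    omega
  have hyu : y ≠ u := by rintro rfl; simp at hyB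
  obtain ⟨z, hyz, hzu⟩ := hT.connected.exists_adj_dist_add_one_eq hyu
  have hcz : c ≠ z := by
    rintro rfl
    rw [dist_comm (u := u) (v := y), dist_comm (u := u) (v := c)] at hu
    omega
  refine (ih _ (by omega) hyz hyB ?_ rfl).trans (hT.sideOf_subset_sideOf_of_adj hcy hyz hcz)
  rw [mem_sideOf, dist_comm (u := u) (v := z), dist_comm (u := u) (v := y)]
  omega

section Weight

variable [Fintype V]

theorem branchSize_eq_ncard_sideOf (v u : V) :
    branchSize G v u = (sideOf G u v).ncard := by
  classical
  rw [branchSize, ← Set.ncard_coe_finset]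
  congr
  ext
  simp

variable [DecidableRel G.Adj]

theorem ncard_sideOf_le_weight {v y : V} (hvy : G.Adj v y) :
    (sideOf G y v).ncard ≤ weight G v := by
  rw [← branchSize_eq_ncard_sideOf]
  exact Finset.le_sup (f := branchSize G v) (by simpa using hvy)

theorem IsTree.ncard_sideOf_le_weight_of_mem (hT : G.IsTree) {u v c : V} (huv : G.Adj u v)
    (hc : c ∈ sideOf G v u) : (sideOf G u v).ncard ≤ weight G c := by
  have hcu : c ≠ u := by rintro rfl; simp at hc
  obtain ⟨y, hcy, hyu⟩ := hT.connected.exists_adj_dist_add_one_eq hcu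
  have hu : u ∈ sideOf G y c := by
    rw [mem_sideOf, dist_comm (u := u) (v := y), dist_comm (u := u) (v := c)]
    omega
  exact (Set.ncard_le_ncard (hT.sideOf_subset_sideOf huv hcy hc hu)).trans
    (ncard_sideOf_le_weight hcy)

theorem IsTree.weight_le_max (hT : G.IsTree) {u v : V} (huv : G.Adj u v) :
    weight G u ≤ max (sideOf G v u).ncard ((sideOf G u v).ncard - 1) := by
  refine Finset.sup_le fun z hz => ?_
  rw [mem_neighborFinset] at hz
  rw [branchSize_eq_ncard_sideOf]
  by_cases hzv : z = v
  · subst hzv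
    exact le_max_left _ _
  refine le_max_of_le_right (Nat.le_sub_one_of_lt (Set.ncard_lt_ncard ?_))
  exact (Set.ssubset_iff_of_subset (hT.sideOf_subset_sideOf_of_adj huv.symm hz (Ne.symm hzv))).mpr
    ⟨u, left_mem_sideOf huv, right_notMem_sideOf⟩

theorem IsTree.centroid_subset_sideOf (hT : G.IsTree) {u v : V} (huv : G.Adj u v)
    (h : (sideOf G v u).ncard < (sideOf G u v).ncard) : centroid G ⊆ sideOf G u v := by
  intro c hc
  refine (hT.mem_sideOf_or_mem_sideOf huv c).resolve_right fun hcv => ?_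
  have := hT.ncard_sideOf_le_weight_of_mem huv hcv
  have := hT.weight_le_max huv
  have := hc u
  omega

theorem IsTree.mem_centroid_of_ncard_eq (hT : G.IsTree) {u v : V} (huv : G.Adj u v)
    (h : (sideOf G v u).ncard = (sideOf G u v).ncard) : v ∈ centroid G := by
  intro x
  have := hT.weight_le_max huv.symm
  rcases hT.mem_sideOf_or_mem_sideOf huv x with hx | hx
  · have := hT.ncard_sideOf_le_weight_of_mem huv.symm hx
    omega
  · have := hT.ncard_sideOf_le_weight_of_mem huv hx
    omega

theorem centroid_nonempty [Nonempty V] : (centroid G).Nonempty :=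
  Finite.exists_min (weight G)

end Weight

end SimpleGraph

/-- Let `e = {u,v}` be an edge of a tree `T`. Then `|V(T_e(u))| > |V(T_e(v))|` if and only if
the centroid `C_d(T)` is contained in `V(T_e(u))`. -/
theorem centroid_side_iff {V : Type*} [Fintype V] (G : SimpleGraph V) [DecidableRel G.Adj]
    (hT : G.IsTree) {u v : V} (huv : G.Adj u v) :
    (sideOf G v u).ncard < (sideOf G u v).ncard ↔ centroid G ⊆ sideOf G u v := by
  refine ⟨hT.centroid_subset_sideOf huv, fun h => ?_⟩
  by_contra hge
  rcases (not_lt.mp hge).lt_or_eq with hlt | heq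
  · have : Nonempty V := ⟨u⟩
    obtain ⟨c, hc⟩ := centroid_nonempty (G := G)
    exact lt_asymm (mem_sideOf.mp (h hc))
      (mem_sideOf.mp (hT.centroid_subset_sideOf huv.symm hlt hc))
  · exact right_notMem_sideOf (h (hT.mem_centroid_of_ncard_eq huv heq.symm))
end

section
/- Let T be a tree and e = {u,v} an edge of T. Then the subtree core S_c(T) is contained in V(T_e(u)) if and only if f_{T_e(u)}(u) > f_{T_e(v)}(v). -/
/-!
Write `c(x, y)` for the number of subtrees containing `x` but not `y`. Splitting the subtrees
through `x` according to whether they contain `y` gives `f(x) - f(y) = c(x, y) - c(y, x)`, and for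
the edge `{u, v}` the count `c(u, v)` is `f_{T_e(u)}(u)`; so the right-hand side says `f(v) < f(u)`.
For a path `x - y - z` in a tree, `S ↦ S ∪ {y}` injects the subtrees counted by `c(x, y)` into
those counted by `c(y, z)`, missing `{y}`. Hence `c(x, y) < c(y, z)`, and `f` is strictly concave
along paths: `f(x) + f(z) < 2 f(y)`. So once `f` does not increase across an edge, it does not
increase along any path continuing through that edge, which confines the maximisers of `f` to the
side of `e` where `f` is larger.
-/

open SimpleGraph Finset

/-- Number of subtrees of the subtree of `G` induced on `A` which contain `x`. -/
noncomputable def numSubtreesIn {V : Type*} (G : SimpleGraph V) (A : Set V) (x : V) : ℕ :=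
  {S : Finset V | x ∈ S ∧ ↑S ⊆ A ∧ (G.induce (S : Set V)).Connected}.ncard

namespace SimpleGraph

variable {V : Type*} {G : SimpleGraph V}

lemma IsAcyclic.support_subset_of_preconnected_induce (hG : G.IsAcyclic) {s : Set V}
    (hs : (G.induce s).Preconnected) {x y : V} (hx : x ∈ s) (hy : y ∈ s) {p : G.Walk x y}
    (hp : p.IsPath) : ∀ w ∈ p.support, w ∈ s := by
  obtain ⟨q, hq⟩ := (hs ⟨x, hx⟩ ⟨y, hy⟩).exists_isPath
  let q' : G.Walk x y := q.map (Embedding.induce s).toHom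
  have hqp : q' = p :=
    congrArg Subtype.val <| (hG.subsingleton_path x y).elim
      ⟨q', hq.map (Embedding.induce (G := G) s).injective⟩ ⟨p, hp⟩
  intro w hw
  rw [← hqp] at hw
  have hw' : w ∈ q.support.map (Embedding.induce (G := G) s).toHom := q.support_map _ ▸ hw
  obtain ⟨w', -, rfl⟩ := List.mem_map.mp hw'
  exact w'.2

lemma Adj.exists_isPath_cons_of_dist_le {u v w : V} (huv : G.Adj u v) (hvw : G.Reachable v w)
    (h : G.dist v w ≤ G.dist u w) : ∃ p : G.Walk v w, (p.cons huv).IsPath := by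
  classical
  obtain ⟨p, hp, hlen⟩ := hvw.exists_path_of_dist
  refine ⟨p, hp.cons fun hu => ?_⟩
  have hdrop := p.length_dropUntil_lt_length hu huv.ne
  have := G.dist_le (p.dropUntil u hu)
  omega

end SimpleGraph

noncomputable def numSubtreesAvoiding {V : Type*} (G : SimpleGraph V) (x y : V) : ℕ :=
  {S : Finset V | x ∈ S ∧ y ∉ S ∧ (G.induce (S : Set V)).Connected}.ncard

lemma numSubtreesIn_sideOf {V : Type*} {G : SimpleGraph V} (hT : G.IsTree) {u v : V}
    (huv : G.Adj u v) :
    numSubtreesIn G (sideOf G u v) u = numSubtreesAvoiding G u v := by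
  rw [numSubtreesIn, numSubtreesAvoiding]
  congr 1
  ext S
  simp only [Set.mem_ofPred_eq, and_congr_right_iff]
  intro hu
  constructor
  · rintro ⟨hside, hconn⟩
    refine ⟨fun hv => ?_, hconn⟩
    simpa [sideOf] using hside hv
  · rintro ⟨hv, hconn⟩
    refine ⟨fun w hw => ?_, hconn⟩
    by_contra hwu
    obtain ⟨p, hp⟩ := huv.exists_isPath_cons_of_dist_le (hT.connected.preconnected v w)
      (by simpa [sideOf, G.dist_comm] using hwu)
    exact hv <| hT.isAcyclic.support_subset_of_preconnected_induce hconn.preconnected hu hw hp v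
      (by simp)

section Finite

variable {V : Type*} [Finite V]

lemma numSubtrees_eq_add_numSubtreesAvoiding (G : SimpleGraph V) (x y : V) :
    numSubtrees G x =
      {S : Finset V | x ∈ S ∧ y ∈ S ∧ (G.induce (S : Set V)).Connected}.ncard +
        numSubtreesAvoiding G x y := by
  have hdisj : Disjoint {S : Finset V | x ∈ S ∧ y ∈ S ∧ (G.induce (S : Set V)).Connected}
      {S : Finset V | x ∈ S ∧ y ∉ S ∧ (G.induce (S : Set V)).Connected} :=
    Set.disjoint_left.mpr fun _ hS hS' => hS'.2.1 hS.2.1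
  rw [numSubtrees, numSubtreesAvoiding, ← Set.ncard_union_eq hdisj]
  congr 1
  ext S
  by_cases hy : y ∈ S <;> simp [hy]

lemma numSubtrees_add_numSubtreesAvoiding (G : SimpleGraph V) (x y : V) :
    numSubtrees G x + numSubtreesAvoiding G y x = numSubtrees G y + numSubtreesAvoiding G x y := by
  rw [numSubtrees_eq_add_numSubtreesAvoiding G x y, numSubtrees_eq_add_numSubtreesAvoiding G y x]
  simp only [and_left_comm (a := y ∈ _)]
  omega

lemma numSubtreesAvoiding_lt {G : SimpleGraph V} (hG : G.IsAcyclic) {x y z : V}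
    (hxy : G.Adj x y) (hyz : G.Adj y z) (hxz : x ≠ z) :
    numSubtreesAvoiding G x y < numSubtreesAvoiding G y z := by
  classical
  set A := {S : Finset V | x ∈ S ∧ y ∉ S ∧ (G.induce (S : Set V)).Connected}
  set B := {S : Finset V | y ∈ S ∧ z ∉ S ∧ (G.induce (S : Set V)).Connected}
  have hmaps : Set.MapsTo (insert y) A B := by
    rintro S ⟨hx, hy, hconn⟩
    have hz : z ∉ S := fun hz => hy <|
      hG.support_subset_of_preconnected_induce hconn.preconnected hx hz
        (p := .cons hxy (.cons hyz .nil)) (by simp [hxz, hxy.ne, hyz.ne]) y (by simp)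
    refine ⟨mem_insert_self y S, by simp [hz, hyz.ne'], ?_⟩
    rw [coe_insert, ← Set.singleton_union]
    have hy_conn : (G.induce {y}).Preconnected := by
      rw [induce_singleton_eq_top]
      exact connected_top.preconnected
    exact connected_induce_union hy_conn hconn.preconnected (Set.mem_singleton y) hx hxy.symm
  have hinj : Set.InjOn (insert y) A := fun S hS T hT hST => by
    simpa [erase_insert hS.2.1, erase_insert hT.2.1] using congrArg (erase · y) hST
  have hsingleton : {y} ∈ B \ insert y '' A := by
    refine ⟨⟨mem_singleton_self y, by simpa using hyz.ne', ?_⟩, ?_⟩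
    · rw [coe_singleton, induce_singleton_eq_top]
      exact connected_top
    rintro ⟨S, hS, hSy⟩
    exact hxy.ne (mem_singleton.mp (hSy ▸ mem_insert_of_mem hS.1))
  calc A.ncard = (insert y '' A).ncard := hinj.ncard_image.symm
    _ < B.ncard := Set.ncard_lt_ncard <|
      (Set.ssubset_iff_of_subset hmaps.image_subset).mpr ⟨_, hsingleton.1, hsingleton.2⟩

lemma numSubtrees_add_lt_two_mul {G : SimpleGraph V} (hG : G.IsAcyclic) {x y z : V}
    (hxy : G.Adj x y) (hyz : G.Adj y z) (hxz : x ≠ z) :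
    numSubtrees G x + numSubtrees G z < 2 * numSubtrees G y := by
  have hx := numSubtrees_add_numSubtreesAvoiding G x y
  have hz := numSubtrees_add_numSubtreesAvoiding G z y
  have hxyz := numSubtreesAvoiding_lt hG hxy hyz hxz
  have hzyx := numSubtreesAvoiding_lt hG hyz.symm hxy.symm hxz.symm
  omega

lemma numSubtrees_le_of_isPath_cons {G : SimpleGraph V} (hG : G.IsAcyclic) {x y w : V}
    (hxy : G.Adj x y) (p : G.Walk y w) (hp : (p.cons hxy).IsPath)
    (hf : numSubtrees G y ≤ numSubtrees G x) :
    numSubtrees G w ≤ numSubtrees G y := by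
  induction p generalizing x with
  | nil => rfl
  | @cons y z w hyz q ih =>
    have hxz : x ≠ z := by
      rintro rfl
      exact (Walk.cons_isPath_iff _ _).mp hp |>.2 (by simp)
    have hconcave := numSubtrees_add_lt_two_mul hG hxy hyz hxz
    exact (ih hyz hp.of_cons (by omega)).trans (by omega)

lemma numSubtrees_le_of_dist_le {G : SimpleGraph V} (hT : G.IsTree) {u v w : V}
    (huv : G.Adj u v) (hf : numSubtrees G v ≤ numSubtrees G u) (hw : G.dist v w ≤ G.dist u w) :
    numSubtrees G w ≤ numSubtrees G v := by
  obtain ⟨p, hp⟩ := huv.exists_isPath_cons_of_dist_le (hT.connected.preconnected v w) hw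
  exact numSubtrees_le_of_isPath_cons hT.isAcyclic huv p hp hf

end Finite

/-- Let `e = {u,v}` be an edge of a tree `T`. Then the subtree core `S_c(T)` is contained in
`V(T_e(u))` if and only if `f_{T_e(u)}(u) > f_{T_e(v)}(v)`. -/
theorem subtreeCore_side_iff {V : Type*} [Fintype V] (G : SimpleGraph V)
    (hT : G.IsTree) {u v : V} (huv : G.Adj u v) :
    subtreeCore G ⊆ sideOf G u v ↔
      numSubtreesIn G (sideOf G v u) v < numSubtreesIn G (sideOf G u v) u := by
  have hsplit := numSubtrees_add_numSubtreesAvoiding G u v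
  rw [numSubtreesIn_sideOf hT huv, numSubtreesIn_sideOf hT huv.symm,
    show numSubtreesAvoiding G v u < numSubtreesAvoiding G u v ↔
      numSubtrees G v < numSubtrees G u by omega]
  constructor
  · intro hcore
    by_contra! hle
    have : Nonempty V := ⟨u⟩
    obtain ⟨w, hw⟩ := Finite.exists_max (numSubtrees G)
    have hwu : G.dist u w ≤ G.dist v w := by
      simpa [G.dist_comm] using (show G.dist w u < G.dist w v from hcore hw).le
    have hv : v ∈ subtreeCore G := fun x =>
      (hw x).trans ((numSubtrees_le_of_dist_le hT huv.symm hle hwu).trans hle)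
    simpa [sideOf] using hcore hv
  · intro hlt w hw
    by_contra hside
    have hwv := numSubtrees_le_of_dist_le hT huv hlt.le (w := w)
      (by simpa [sideOf, G.dist_comm] using hside)
    exact (hw u).not_gt (hwv.trans_lt hlt)
end

section
/- A vertex u belongs to the subtree core S_c(T) if and only if for each neighbour v of u, f_{T_e(u)}(u) ≥ f_{T_e(v)}(v), where e = {u,v}. Moreover, if u ∈ S_c(T) and equality holds for some neighbour v, then v ∈ S_c(T). -/
open SimpleGraph Finset

/-!
Write `T_{xy}(x)` for the component of `T - xy` containing `x`. The subtrees containing `u` are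
those containing both ends of an edge `uv` and those inside `T_{uv}(u)`; the former are shared
with `v`, so `f_T(u) - f_T(v) = f_{T_{uv}(u)}(u) - f_{T_{uv}(v)}(v)`. For a path `a b c`,
`T_{bc}(c) ∪ {b} ⊆ T_{ab}(b)`, and `S ↦ S ∪ {b}` together with the subtree `{b}` gives
`f_{T_{bc}(c)}(c) < f_{T_{ab}(b)}(b)`. Hence the local condition at `u` across one edge
propagates strictly across every edge further from `u`, and `f_T` decreases along every path
leaving `u`.
-/

namespace SimpleGraph

variable {V : Type*} {G : SimpleGraph V}

lemma Walk.notMem_support_of_length_lt_dist {x y a : V} (p : G.Walk x y)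
    (hp : p.length < G.dist x a) : a ∉ p.support := by
  classical
  intro ha
  have := G.dist_le (p.takeUntil a ha)
  have := p.length_takeUntil_le_length ha
  omega

lemma IsAcyclic.eq_of_adj_of_dist_lt (hG : G.IsAcyclic) {x a b c : V} (hb : G.Adj b a)
    (hc : G.Adj c a) (hbx : G.dist x b < G.dist x a) (hcx : G.dist x c < G.dist x a) :
    b = c := by
  have hxa : G.Reachable x a := Reachable.of_dist_ne_zero (by omega)
  obtain ⟨p, hp, hpl⟩ := (hxa.trans hb.symm.reachable).exists_path_of_dist
  obtain ⟨q, hq, hql⟩ := (hxa.trans hc.symm.reachable).exists_path_of_dist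
  have hpq := (hG.subsingleton_path x a).elim
    ⟨_, hp.concat (p.notMem_support_of_length_lt_dist (by omega)) hb⟩
    ⟨_, hq.concat (q.notMem_support_of_length_lt_dist (by omega)) hc⟩
  exact (Walk.concat_inj (congrArg Subtype.val hpq)).1

lemma IsAcyclic.mem_support_of_dist_eq_add_one (hG : G.IsAcyclic) {x u v : V}
    (hvu : G.Adj v u) (h : G.dist x u = G.dist x v + 1) (p : G.Walk x u) : v ∈ p.support := by
  classical
  have hxv : G.Reachable x v := (Reachable.of_dist_ne_zero (by omega)).trans hvu.symm.reachable
  obtain ⟨q, hq, hql⟩ := hxv.exists_path_of_dist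
  exact p.support_bypass_subset_support <| hG.mem_support_of_ne_mem_support_of_adj_of_isPath
    p.bypass_isPath hq hvu.symm (q.notMem_support_of_length_lt_dist (by omega))

end SimpleGraph

section SubtreeCount

variable {V : Type*} {G : SimpleGraph V}

lemma subset_sideOf_of_connected (hT : G.IsTree) {u v : V} (huv : G.Adj u v) {S : Set V}
    (hS : (G.induce S).Connected) (hu : u ∈ S) (hv : v ∉ S) : S ⊆ sideOf G u v := by
  intro x hx
  obtain ⟨W⟩ := hS.preconnected ⟨x, hx⟩ ⟨u, hu⟩
  have hvW : v ∉ (W.map (Embedding.induce S).toHom).support := by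
    simp only [Walk.support_map, List.mem_map, not_exists, not_and]
    exact fun y _ hyv ↦ hv (hyv ▸ y.2)
  rcases hT.dist_eq_dist_add_one_of_adj x huv with h | h
  · exact absurd (hT.isAcyclic.mem_support_of_dist_eq_add_one huv.symm h _) hvW
  · show G.dist x u < G.dist x v
    omega

lemma sideOf_subset_sideOf (hT : G.IsTree) {a b c : V} (hab : G.Adj a b) (hbc : G.Adj b c)
    (hac : a ≠ c) : sideOf G c b ⊆ sideOf G b a := by
  intro x (hx : G.dist x c < G.dist x b)
  show G.dist x b < G.dist x a
  rcases hT.dist_eq_dist_add_one_of_adj x hab with h | h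
  · omega
  · exact absurd (hT.isAcyclic.eq_of_adj_of_dist_lt hab hbc.symm (by omega) hx) hac

lemma numSubtrees_eq_add_numSubtreesIn [Finite V] (hT : G.IsTree) {u v : V} (huv : G.Adj u v) :
    numSubtrees G u = {S : Finset V | u ∈ S ∧ v ∈ S ∧ (G.induce (S : Set V)).Connected}.ncard
      + numSubtreesIn G (sideOf G u v) u := by
  rw [numSubtrees, numSubtreesIn,
    ← Set.ncard_inter_add_ncard_sdiff_eq_ncard _ {S : Finset V | v ∈ S}]
  have hv : v ∉ sideOf G u v := by simp [sideOf]
  congr 2 <;> ext S <;> simp only [Set.mem_inter_iff, Set.mem_sdiff, Set.mem_ofPred_eq]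
  · tauto
  · refine ⟨fun ⟨⟨hu, hS⟩, hvS⟩ ↦ ⟨hu, subset_sideOf_of_connected hT huv hS hu hvS, hS⟩,
      fun ⟨hu, hside, hS⟩ ↦ ⟨⟨hu, hS⟩, fun hvS ↦ hv (hside hvS)⟩⟩

/-- `f_T(u) - f_{T_e(u)}(u)` counts the subtrees through the edge `e = uv`, so it is symmetric
in `u` and `v`. -/
lemma numSubtrees_add_numSubtreesIn_eq [Finite V] (hT : G.IsTree) {u v : V} (huv : G.Adj u v) :
    numSubtrees G u + numSubtreesIn G (sideOf G v u) v
      = numSubtrees G v + numSubtreesIn G (sideOf G u v) u := by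
  rw [numSubtrees_eq_add_numSubtreesIn hT huv, numSubtrees_eq_add_numSubtreesIn hT huv.symm]
  simp only [and_left_comm (a := u ∈ _)]
  omega

lemma numSubtrees_le_numSubtrees_iff_s12 [Finite V] (hT : G.IsTree) {u v : V} (huv : G.Adj u v) :
    numSubtrees G v ≤ numSubtrees G u ↔
      numSubtreesIn G (sideOf G v u) v ≤ numSubtreesIn G (sideOf G u v) u := by
  have := numSubtrees_add_numSubtreesIn_eq hT huv
  omega

lemma numSubtreesIn_lt_of_adj [Finite V] {A B : Set V} {b c : V} (hbc : G.Adj b c)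
    (hbA : b ∉ A) (hAB : insert b A ⊆ B) : numSubtreesIn G A c < numSubtreesIn G B b := by
  classical
  set SA := {S : Finset V | c ∈ S ∧ ↑S ⊆ A ∧ (G.induce (S : Set V)).Connected}
  have hinj : Set.InjOn (insert b) SA := fun S hS S' hS' h ↦ by
    rw [← Finset.erase_insert (fun hb ↦ hbA (hS.2.1 hb)),
      ← Finset.erase_insert (fun hb ↦ hbA (hS'.2.1 hb)), h]
  have hb : {b} ∉ insert b '' SA := by
    rintro ⟨S, hS, hSb⟩
    exact hbc.ne' (Finset.mem_singleton.mp (hSb ▸ Finset.mem_insert_of_mem hS.1))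
  calc numSubtreesIn G A c < (insert {b} (insert b '' SA)).ncard := by
        rw [Set.ncard_insert_of_notMem hb, hinj.ncard_image]
        exact Nat.lt_succ_self _
    _ ≤ numSubtreesIn G B b := by
      refine Set.ncard_le_ncard ?_ (Set.toFinite _)
      rintro _ (rfl | ⟨S, ⟨hcS, hSA, hS⟩, rfl⟩)
      · refine ⟨Finset.mem_singleton_self b, by simpa using hAB (Set.mem_insert b A), ?_⟩
        rw [Finset.coe_singleton]
        exact (connected_iff _).mpr ⟨.of_subsingleton, inferInstance⟩
      · refine ⟨Finset.mem_insert_self b S, ?_, ?_⟩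
        · rw [Finset.coe_insert]
          exact (Set.insert_subset_insert hSA).trans hAB
        · rw [Finset.coe_insert, Set.insert_eq]
          exact connected_induce_union Preconnected.of_subsingleton hS.preconnected
            rfl hcS hbc

lemma numSubtreesIn_sideOf_lt [Finite V] (hT : G.IsTree) {a b c : V} (hab : G.Adj a b)
    (hbc : G.Adj b c) (hac : a ≠ c) :
    numSubtreesIn G (sideOf G c b) c < numSubtreesIn G (sideOf G b a) b := by
  refine numSubtreesIn_lt_of_adj hbc (by simp [sideOf]) (Set.insert_subset ?_ ?_)
  · simp [sideOf, dist_eq_one_iff_adj.mpr hab.symm]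
  · exact sideOf_subset_sideOf hT hab hbc hac

lemma numSubtreesIn_sideOf_lt_of_le [Finite V] (hT : G.IsTree) {a b c : V} (hab : G.Adj a b)
    (hbc : G.Adj b c) (hac : a ≠ c)
    (h : numSubtreesIn G (sideOf G b a) b ≤ numSubtreesIn G (sideOf G a b) a) :
    numSubtreesIn G (sideOf G c b) c < numSubtreesIn G (sideOf G b c) b :=
  calc numSubtreesIn G (sideOf G c b) c < numSubtreesIn G (sideOf G b a) b :=
        numSubtreesIn_sideOf_lt hT hab hbc hac
    _ ≤ numSubtreesIn G (sideOf G a b) a := h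
    _ < numSubtreesIn G (sideOf G b c) b := numSubtreesIn_sideOf_lt hT hbc.symm hab.symm hac.symm

lemma numSubtrees_le_of_isPath [Finite V] (hT : G.IsTree) {b w : V} {p : G.Walk b w}
    (hp : p.IsPath) {a : V} (hab : G.Adj a b) (ha : a ∉ p.support)
    (h : numSubtreesIn G (sideOf G b a) b ≤ numSubtreesIn G (sideOf G a b) a) :
    numSubtrees G w ≤ numSubtrees G b := by
  induction p generalizing a with
  | nil => rfl
  | @cons _ c _ hbc q ih =>
    obtain ⟨hq, hbq⟩ := (Walk.cons_isPath_iff hbc q).mp hp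
    have hac : a ≠ c := fun hac ↦ ha (by simp [hac])
    have hlt := numSubtreesIn_sideOf_lt_of_le hT hab hbc hac h
    exact (ih hq hbc hbq hlt.le).trans ((numSubtrees_le_numSubtrees_iff_s12 hT hbc).mpr hlt.le)

end SubtreeCount

/-- A vertex `u` belongs to the subtree core `S_c(T)` if and only if for each neighbour `v`
of `u`, `f_{T_e(u)}(u) ≥ f_{T_e(v)}(v)` where `e = {u,v}`. Moreover, if `u ∈ S_c(T)` and
equality holds for some neighbour `v`, then `v ∈ S_c(T)`. -/
theorem subtreeCore_mem_iff {V : Type*} [Fintype V] (G : SimpleGraph V)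
    (hT : G.IsTree) (u : V) :
    (u ∈ subtreeCore G ↔ ∀ v : V, G.Adj u v →
      numSubtreesIn G (sideOf G v u) v ≤ numSubtreesIn G (sideOf G u v) u) ∧
    (∀ v : V, G.Adj u v → u ∈ subtreeCore G →
      numSubtreesIn G (sideOf G u v) u = numSubtreesIn G (sideOf G v u) v →
      v ∈ subtreeCore G) := by
  refine ⟨⟨fun hu v huv ↦ (numSubtrees_le_numSubtrees_iff_s12 hT huv).mp (hu v), fun h w ↦ ?_⟩,
    fun v huv hu heq w ↦ (hu w).trans ((numSubtrees_le_numSubtrees_iff_s12 hT huv.symm).mpr heq.le)⟩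
  obtain ⟨p, hp⟩ := hT.connected.exists_isPath u w
  cases p with
  | nil => rfl
  | cons huv q =>
    obtain ⟨hq, huq⟩ := (Walk.cons_isPath_iff huv q).mp hp
    have hle := h _ huv
    exact (numSubtrees_le_of_isPath hT hq huv huq hle).trans
      ((numSubtrees_le_numSubtrees_iff_s12 hT huv).mpr hle)
end

section
/- Among all rooted binary trees on n vertices, the tree T_{r,2}^n with exactly two vertices at every positive level minimizes the number of subtrees containing the root. -/
/-!
Root the tree at `r` and let `f v` count the subtrees of the descendants of `v` that contain
`v`. Such a subtree is `v` together with, for each child `w`, either nothing or a subtree counted by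
`f w`; hence `f v = ∏ w, (f w + 1)`. In a rooted binary tree every vertex has `0` or `2` children,
and if `v` has `2k + 1` descendants then `f v + 2 ≥ 3 * 2 ^ k`, by induction, since
`a + 2 ≥ 3 * 2 ^ i` and `b + 2 ≥ 3 * 2 ^ j` give `(a + 1) * (b + 1) + 2 ≥ 3 * 2 ^ (i + j + 1)`.
When every positive level has at most two vertices, at most one child of each vertex has children
of its own, so `f v = 2 * (f w + 1)` and the bound `f v + 2 ≤ 3 * 2 ^ k` follows in the same way.
-/

open SimpleGraph Finset

/-- `G` is a rooted binary tree with root `r`: a tree in which the root has degree 2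
(or the tree is a single vertex) and every non-root vertex has degree 1 or 3. -/
def IsRootedBinaryTree {V : Type*} [Fintype V] (G : SimpleGraph V) [DecidableRel G.Adj]
    (r : V) : Prop :=
  G.IsTree ∧ (Fintype.card V = 1 ∨ G.degree r = 2) ∧
    ∀ v : V, v ≠ r → G.degree v = 1 ∨ G.degree v = 3

/-- The height of a rooted tree: the maximum distance from the root to a vertex. -/
noncomputable def treeHeight {V : Type*} [Fintype V] (G : SimpleGraph V) (r : V) : ℕ :=
  Finset.univ.sup (fun v => G.dist r v)

namespace SimpleGraph.IsTree

open Walk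

variable {V : Type*} {T : SimpleGraph V} (hT : T.IsTree)

noncomputable def rootPath (r x : V) : T.Walk r x := (hT.existsUnique_path r x).choose

variable {r v w x y z : V} {S : Finset V}

lemma isPath_rootPath (r x : V) : (hT.rootPath r x).IsPath :=
  (hT.existsUnique_path r x).choose_spec.1

lemma eq_rootPath {p : T.Walk r x} (hp : p.IsPath) : p = hT.rootPath r x :=
  (hT.existsUnique_path r x).choose_spec.2 p hp

lemma length_rootPath (r x : V) : (hT.rootPath r x).length = T.dist r x := by
  obtain ⟨p, hp⟩ := hT.connected.exists_walk_length_eq_dist r x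
  rw [← hT.eq_rootPath (p.isPath_of_length_eq_dist hp), hp]

variable [DecidableEq V]

lemma takeUntil_rootPath (h : y ∈ (hT.rootPath r x).support) :
    (hT.rootPath r x).takeUntil y h = hT.rootPath r y :=
  hT.eq_rootPath ((hT.isPath_rootPath r x).takeUntil h)

lemma mem_support_rootPath_trans (hzy : z ∈ (hT.rootPath r y).support)
    (hyx : y ∈ (hT.rootPath r x).support) : z ∈ (hT.rootPath r x).support := by
  rw [← hT.takeUntil_rootPath hyx] at hzy
  exact support_takeUntil_subset_support _ hyx hzy

lemma dist_le_of_mem_support_rootPath (h : y ∈ (hT.rootPath r x).support) :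
    T.dist r y ≤ T.dist r x := by
  rw [← hT.length_rootPath, ← hT.length_rootPath, ← hT.takeUntil_rootPath h]
  exact length_takeUntil_le_length _ h

lemma dist_lt_of_mem_support_rootPath (h : y ∈ (hT.rootPath r x).support) (hyx : y ≠ x) :
    T.dist r y < T.dist r x := by
  rw [← hT.length_rootPath, ← hT.length_rootPath, ← hT.takeUntil_rootPath h]
  exact length_takeUntil_lt_length h hyx

lemma getVert_rootPath_dist (h : y ∈ (hT.rootPath r x).support) :
    (hT.rootPath r x).getVert (T.dist r y) = y := by
  rw [← hT.length_rootPath, ← hT.takeUntil_rootPath h]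
  exact getVert_length_takeUntil h

lemma dist_getVert_rootPath {n : ℕ} (hn : n ≤ T.dist r x) :
    T.dist r ((hT.rootPath r x).getVert n) = n := by
  have h := getVert_mem_support (hT.rootPath r x) n
  refine (hT.isPath_rootPath r x).getVert_injOn ?_ ?_ (hT.getVert_rootPath_dist h)
  · simpa [hT.length_rootPath] using hT.dist_le_of_mem_support_rootPath h
  · simpa [hT.length_rootPath] using hn

lemma eq_of_mem_support_rootPath_of_dist_eq (hy : y ∈ (hT.rootPath r x).support)
    (hz : z ∈ (hT.rootPath r x).support) (h : T.dist r y = T.dist r z) : y = z := by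
  rw [← hT.getVert_rootPath_dist hy, ← hT.getVert_rootPath_dist hz, h]

lemma mem_support_rootPath_of_dist_le (hy : y ∈ (hT.rootPath r x).support)
    (hz : z ∈ (hT.rootPath r x).support) (h : T.dist r y ≤ T.dist r z) :
    y ∈ (hT.rootPath r z).support := by
  have hn : T.dist r y ≤ ((hT.rootPath r x).takeUntil z hz).length := by
    rwa [hT.takeUntil_rootPath, hT.length_rootPath]
  rw [← hT.getVert_rootPath_dist hy, ← getVert_takeUntil hz hn, ← hT.takeUntil_rootPath hz]
  exact getVert_mem_support _ _

lemma connected_induce_iff_forall_mem_support_rootPath {S : Finset V} (hr : r ∈ S) :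
    (T.induce (S : Set V)).Connected ↔
      ∀ x ∈ S, ∀ y ∈ (hT.rootPath r x).support, y ∈ S := by
  constructor
  · intro hS x hx y hy
    obtain ⟨p⟩ := hS.preconnected ⟨r, hr⟩ ⟨x, hx⟩
    have hsupp : ∀ y ∈ (p.map (Embedding.induce (S : Set V)).toHom).support, y ∈ S := by
      intro y hy
      rw [Walk.support_map, List.mem_map] at hy
      obtain ⟨⟨y, hyS⟩, -, rfl⟩ := hy
      exact hyS
    rw [← hT.eq_rootPath (Walk.bypass_isPath _)] at hy
    exact hsupp y (support_bypass_subset_support _ hy)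
  · intro hS
    rw [connected_iff_exists_forall_reachable]
    exact ⟨⟨r, hr⟩, fun ⟨x, hx⟩ => ⟨(hT.rootPath r x).induce _ (hS x hx)⟩⟩

variable [Fintype V]

noncomputable def descendants (r v : V) : Finset V := {x | v ∈ (hT.rootPath r x).support}

lemma mem_descendants : x ∈ hT.descendants r v ↔ v ∈ (hT.rootPath r x).support := by
  simp [descendants]

lemma descendants_self_eq_univ (r : V) : hT.descendants r r = univ :=
  eq_univ_of_forall fun _ => hT.mem_descendants.2 (start_mem_support _)

lemma self_mem_descendants (r v : V) : v ∈ hT.descendants r v :=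
  hT.mem_descendants.2 (end_mem_support _)

def IsRootedSubtree (r v : V) (S : Finset V) : Prop :=
  v ∈ S ∧ S ⊆ hT.descendants r v ∧
    ∀ x ∈ S, ∀ y ∈ hT.descendants r v, y ∈ (hT.rootPath r x).support → y ∈ S

open Classical in
noncomputable def rootedSubtrees (r v : V) : Finset (Finset V) :=
  {S ∈ (hT.descendants r v).powerset | hT.IsRootedSubtree r v S}

lemma mem_rootedSubtrees : S ∈ hT.rootedSubtrees r v ↔ hT.IsRootedSubtree r v S := by
  simp only [rootedSubtrees, mem_filter, mem_powerset, and_iff_right_iff_imp]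
  exact fun h => h.2.1

lemma numSubtrees_eq_card_rootedSubtrees (r : V) :
    numSubtrees T r = #(hT.rootedSubtrees r r) := by
  rw [numSubtrees, ← Set.ncard_coe_finset]
  congr 1
  ext S
  simp only [Set.mem_ofPred_eq, mem_coe, mem_rootedSubtrees, IsRootedSubtree,
    descendants_self_eq_univ, subset_univ, mem_univ, forall_const, true_and]
  exact and_congr_right fun hr => hT.connected_induce_iff_forall_mem_support_rootPath hr

variable [DecidableRel T.Adj]

noncomputable def children (r v : V) : Finset V :=
  {w ∈ T.neighborFinset v | v ∈ (hT.rootPath r w).support}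

lemma mem_children : w ∈ hT.children r v ↔ T.Adj v w ∧ v ∈ (hT.rootPath r w).support := by
  simp [children]

lemma children_subset_descendants : hT.children r v ⊆ hT.descendants r v :=
  fun _ hw => hT.mem_descendants.2 (hT.mem_children.1 hw).2

lemma dist_of_mem_children (hw : w ∈ hT.children r v) : T.dist r w = T.dist r v + 1 := by
  obtain ⟨hvw, hv⟩ := hT.mem_children.1 hw
  rw [← hT.length_rootPath, ← hT.length_rootPath,
    hT.isAcyclic.path_concat (hT.isPath_rootPath r v) (hT.isPath_rootPath r w) hvw hv,
    length_concat]

lemma card_children_self (r : V) : #(hT.children r r) = T.degree r := by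
  rw [← card_neighborFinset_eq_degree, children, filter_true_of_mem]
  exact fun _ _ => start_mem_support _

/-- Every neighbour of a non-root vertex is a child, except its parent, the penultimate vertex
of its root path. -/
lemma card_children_add_one (hv : v ≠ r) : #(hT.children r v) + 1 = T.degree v := by
  have hP := hT.isPath_rootPath r v
  have hnil : ¬ (hT.rootPath r v).Nil := fun h => hv h.eq.symm
  set p := (hT.rootPath r v).penultimate
  have hparent : {w ∈ T.neighborFinset v | v ∉ (hT.rootPath r w).support} = {p} := by
    ext w
    simp only [mem_filter, mem_neighborFinset, mem_singleton]
    constructor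
    · rintro ⟨hvw, hw⟩
      exact hT.isAcyclic.eq_penultimate_of_adj_end hP hvw
        (hT.isAcyclic.mem_support_of_ne_mem_support_of_adj_of_isPath hP
          (hT.isPath_rootPath r w) hvw hw)
    · rintro rfl
      have hpv := adj_penultimate hnil
      exact ⟨hpv.symm, hT.isAcyclic.ne_mem_support_of_support_of_adj_of_isPath hP
        (hT.isPath_rootPath r p) hpv.symm (getVert_mem_support _ _)⟩
  rw [← card_neighborFinset_eq_degree, ← card_filter_add_card_filter_not
    (s := T.neighborFinset v) (fun w => v ∈ (hT.rootPath r w).support), hparent, card_singleton,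
    children]

lemma descendants_subset_of_mem_children (hw : w ∈ hT.children r v) :
    hT.descendants r w ⊆ hT.descendants r v := fun _ hx =>
  hT.mem_descendants.2 <|
    hT.mem_support_rootPath_trans (hT.mem_children.1 hw).2 (hT.mem_descendants.1 hx)

lemma notMem_descendants_of_mem_children (hw : w ∈ hT.children r v) :
    v ∉ hT.descendants r w := fun hv => by
  have := hT.dist_le_of_mem_support_rootPath (hT.mem_descendants.1 hv)
  rw [hT.dist_of_mem_children hw] at this
  omega

lemma disjoint_descendants_of_mem_children {w₁ w₂ : V} (hw₁ : w₁ ∈ hT.children r v)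
    (hw₂ : w₂ ∈ hT.children r v) (hne : w₁ ≠ w₂) :
    Disjoint (hT.descendants r w₁) (hT.descendants r w₂) :=
  Finset.disjoint_left.2 fun _ hx₁ hx₂ => hne <|
    hT.eq_of_mem_support_rootPath_of_dist_eq (hT.mem_descendants.1 hx₁)
      (hT.mem_descendants.1 hx₂)
      (by rw [hT.dist_of_mem_children hw₁, hT.dist_of_mem_children hw₂])

/-- The child of `v` above `x` is the vertex of the root path of `x` one level below `v`. -/
lemma exists_mem_children_of_mem_descendants (hx : x ∈ hT.descendants r v) (hxv : x ≠ v) :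
    ∃ w ∈ hT.children r v, x ∈ hT.descendants r w := by
  rw [mem_descendants] at hx
  have hlt := hT.dist_lt_of_mem_support_rootPath hx hxv.symm
  have hw := getVert_mem_support (hT.rootPath r x) (T.dist r v + 1)
  have hdw := hT.dist_getVert_rootPath (x := x) (n := T.dist r v + 1) hlt
  have hadj := (hT.rootPath r x).adj_getVert_succ (i := T.dist r v) (by
    rwa [hT.length_rootPath])
  rw [hT.getVert_rootPath_dist hx] at hadj
  exact ⟨_, hT.mem_children.2 ⟨hadj, hT.mem_support_rootPath_of_dist_le hx hw (by omega)⟩,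
    hT.mem_descendants.2 hw⟩

lemma eq_or_mem_descendants_of_mem_support (hw : w ∈ hT.children r v)
    (hx : x ∈ hT.descendants r w) (hy : y ∈ (hT.rootPath r x).support)
    (hyv : y ∈ hT.descendants r v) : y = v ∨ y ∈ hT.descendants r w := by
  rw [mem_descendants] at hx hyv ⊢
  by_cases h : T.dist r w ≤ T.dist r y
  · exact Or.inr (hT.mem_support_rootPath_of_dist_le hx hy h)
  · have := hT.dist_le_of_mem_support_rootPath hyv
    rw [hT.dist_of_mem_children hw] at h
    exact Or.inl (hT.eq_of_mem_support_rootPath_of_dist_eq hy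
      (hT.mem_support_rootPath_trans (hT.mem_children.1 hw).2 hx) (by omega))

lemma descendants_eq_insert_biUnion (r v : V) :
    hT.descendants r v = insert v ((hT.children r v).biUnion (hT.descendants r)) := by
  ext x
  simp only [mem_insert, mem_biUnion]
  constructor
  · intro hx
    by_cases hxv : x = v
    · exact Or.inl hxv
    · exact Or.inr (hT.exists_mem_children_of_mem_descendants hx hxv)
  · rintro (rfl | ⟨w, hw, hx⟩)
    · exact hT.self_mem_descendants r x
    · exact hT.descendants_subset_of_mem_children hw hx

lemma card_descendants (r v : V) :
    #(hT.descendants r v) = ∑ w ∈ hT.children r v, #(hT.descendants r w) + 1 := by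
  rw [hT.descendants_eq_insert_biUnion r v, card_insert_of_notMem, card_biUnion]
  · exact fun _ hw₁ _ hw₂ hne => hT.disjoint_descendants_of_mem_children hw₁ hw₂ hne
  · simp only [mem_biUnion, not_exists, not_and]
    exact fun w hw => hT.notMem_descendants_of_mem_children hw

variable {hT} in
lemma IsRootedSubtree.inter_descendants (hS : hT.IsRootedSubtree r v S) {w : V}
    (hw : w ∈ hT.children r v) :
    S ∩ hT.descendants r w = ∅ ∨ hT.IsRootedSubtree r w (S ∩ hT.descendants r w) := by
  rcases (S ∩ hT.descendants r w).eq_empty_or_nonempty with h | ⟨x, hx⟩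
  · exact Or.inl h
  obtain ⟨hxS, hxw⟩ := mem_inter.1 hx
  refine Or.inr ⟨mem_inter.2 ⟨?_, hT.self_mem_descendants r w⟩, inter_subset_right,
    fun x hx y hyw hy => mem_inter.2 ⟨?_, hyw⟩⟩
  · exact hS.2.2 x hxS w (hT.children_subset_descendants hw) (hT.mem_descendants.1 hxw)
  · exact hS.2.2 x (mem_inter.1 hx).1 y (hT.descendants_subset_of_mem_children hw hyw) hy

variable {hT} in
lemma IsRootedSubtree.insert_biUnion_inter (hS : hT.IsRootedSubtree r v S) :
    insert v (univ.biUnion fun w : hT.children r v => S ∩ hT.descendants r w) = S := by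
  ext x
  simp only [mem_insert, mem_biUnion, mem_univ, true_and, mem_inter, Subtype.exists,
    exists_prop]
  constructor
  · rintro (rfl | ⟨w, -, hxS, -⟩)
    · exact hS.1
    · exact hxS
  · intro hxS
    by_cases hxv : x = v
    · exact Or.inl hxv
    · obtain ⟨w, hw, hxw⟩ := hT.exists_mem_children_of_mem_descendants (hS.2.1 hxS) hxv
      exact Or.inr ⟨w, hw, hxS, hxw⟩

lemma isRootedSubtree_insert_biUnion (f : hT.children r v → Finset V)
    (hf : ∀ w, f w = ∅ ∨ hT.IsRootedSubtree r w (f w)) :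
    hT.IsRootedSubtree r v (insert v (univ.biUnion f)) := by
  have hfw (w : hT.children r v) : f w ⊆ hT.descendants r w :=
    (hf w).elim (fun h => h ▸ empty_subset _) (·.2.1)
  refine ⟨mem_insert_self _ _, insert_subset (hT.self_mem_descendants r v)
    (biUnion_subset.2 fun w _ => (hfw w).trans (hT.descendants_subset_of_mem_children w.2)), ?_⟩
  intro x hx y hyv hy
  rcases mem_insert.1 hx with rfl | hx
  · exact mem_insert.2 (Or.inl (hT.eq_of_mem_support_rootPath_of_dist_eq hy
      (end_mem_support _) (le_antisymm (hT.dist_le_of_mem_support_rootPath hy)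
        (hT.dist_le_of_mem_support_rootPath (hT.mem_descendants.1 hyv)))))
  obtain ⟨w, -, hxw⟩ := mem_biUnion.1 hx
  rcases hf w with hw | hw
  · simp [hw] at hxw
  rcases hT.eq_or_mem_descendants_of_mem_support w.2 (hw.2.1 hxw) hy hyv with rfl | hyw
  · exact mem_insert_self _ _
  · exact mem_insert_of_mem (mem_biUnion.2 ⟨w, mem_univ _, hw.2.2 x hxw y hyw hy⟩)

lemma insert_biUnion_inter_descendants (f : hT.children r v → Finset V)
    (hf : ∀ w, f w ⊆ hT.descendants r w) (w : hT.children r v) :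
    insert v (univ.biUnion f) ∩ hT.descendants r w = f w := by
  ext x
  simp only [mem_inter, mem_insert, mem_biUnion, mem_univ, true_and]
  constructor
  · rintro ⟨rfl | ⟨w', hx⟩, hxw⟩
    · exact absurd hxw (hT.notMem_descendants_of_mem_children w.2)
    · obtain rfl : w' = w := Subtype.ext <| by_contra fun hne =>
        Finset.disjoint_left.1 (hT.disjoint_descendants_of_mem_children w'.2 w.2 hne)
          (hf w' hx) hxw
      exact hx
  · exact fun hx => ⟨Or.inr ⟨w, hx⟩, hf w hx⟩

/-- Restricting to the descendants of each child is a bijection between the rooted subtrees at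
`v` and the choices of an empty or rooted subtree at every child of `v`. -/
theorem card_rootedSubtrees (r v : V) :
    #(hT.rootedSubtrees r v) = ∏ w ∈ hT.children r v, (#(hT.rootedSubtrees r w) + 1) := by
  have hcard (w : V) : #(insert ∅ (hT.rootedSubtrees r w)) = #(hT.rootedSubtrees r w) + 1 :=
    card_insert_of_notMem fun h => notMem_empty w (hT.mem_rootedSubtrees.1 h).1
  have mem_pi (f : hT.children r v → Finset V) :
      f ∈ Fintype.piFinset (fun w : hT.children r v => insert ∅ (hT.rootedSubtrees r w)) ↔
        ∀ w, f w = ∅ ∨ hT.IsRootedSubtree r w (f w) := by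
    simp [Fintype.mem_piFinset, mem_rootedSubtrees]
  rw [← prod_coe_sort]
  simp only [← hcard]
  rw [← Fintype.card_piFinset]
  refine card_nbij' (fun S w => S ∩ hT.descendants r w) (fun f => insert v (univ.biUnion f))
    (fun S hS => ?_) (fun f hf => ?_) (fun S hS => ?_) (fun f hf => ?_)
  · exact (mem_pi _).2 fun w => (hT.mem_rootedSubtrees.1 hS).inter_descendants w.2
  · exact hT.mem_rootedSubtrees.2 (hT.isRootedSubtree_insert_biUnion f ((mem_pi f).1 hf))
  · exact (hT.mem_rootedSubtrees.1 hS).insert_biUnion_inter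
  · funext w
    refine hT.insert_biUnion_inter_descendants f (fun w => ?_) w
    exact ((mem_pi f).1 hf w).elim (fun h => h ▸ empty_subset _) (·.2.1)

@[elab_as_elim]
lemma induction_children {P : V → Prop} (h : ∀ v, (∀ w ∈ hT.children r v, P w) → P v)
    (v : V) : P v := by
  induction hn : #(hT.descendants r v) using Nat.strong_induction_on generalizing v with
  | _ n ih =>
    refine h v fun w hw => ih _ ?_ w rfl
    rw [← hn]
    exact card_lt_card ⟨hT.descendants_subset_of_mem_children hw,
      fun hsub => hT.notMem_descendants_of_mem_children hw (hsub (hT.self_mem_descendants r v))⟩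

lemma card_descendants_of_children_eq_empty {v : V} (h : hT.children r v = ∅) :
    #(hT.descendants r v) = 1 := by
  rw [card_descendants, h, sum_empty]

lemma card_rootedSubtrees_of_children_eq_empty {v : V} (h : hT.children r v = ∅) :
    #(hT.rootedSubtrees r v) = 1 := by
  rw [card_rootedSubtrees, h, prod_empty]

lemma card_children_add_card_children_le {v w₁ w₂ : V} (hw₁ : w₁ ∈ hT.children r v)
    (hw₂ : w₂ ∈ hT.children r v) (hne : w₁ ≠ w₂) :
    #(hT.children r w₁) + #(hT.children r w₂) ≤ #{x | T.dist r x = T.dist r v + 2} := by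
  rw [← card_union_of_disjoint ((hT.disjoint_descendants_of_mem_children hw₁ hw₂ hne).mono
    hT.children_subset_descendants hT.children_subset_descendants)]
  refine card_le_card fun x hx => mem_filter.2 ⟨mem_univ x, ?_⟩
  rcases mem_union.1 hx with hx | hx
  · rw [hT.dist_of_mem_children hx, hT.dist_of_mem_children hw₁]
  · rw [hT.dist_of_mem_children hx, hT.dist_of_mem_children hw₂]

lemma three_mul_two_pow_le_card_rootedSubtrees
    (hbin : ∀ x, #(hT.children r x) = 0 ∨ #(hT.children r x) = 2) (v : V) :
    ∃ k, #(hT.descendants r v) = 2 * k + 1 ∧ 3 * 2 ^ k ≤ #(hT.rootedSubtrees r v) + 2 := by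
  induction v using hT.induction_children (r := r) with | h v ih => ?_
  rcases hbin v with h0 | h2
  · rw [card_eq_zero] at h0
    exact ⟨0, hT.card_descendants_of_children_eq_empty h0,
      by simp [hT.card_rootedSubtrees_of_children_eq_empty h0]⟩
  obtain ⟨w₁, w₂, hne, hpair⟩ := card_eq_two.1 h2
  obtain ⟨k₁, hk₁, hc₁⟩ := ih w₁ (by rw [hpair]; exact mem_insert_self _ _)
  obtain ⟨k₂, hk₂, hc₂⟩ := ih w₂ (by rw [hpair]; exact mem_insert_of_mem (mem_singleton_self _))
  refine ⟨k₁ + k₂ + 1, by rw [card_descendants, hpair, sum_pair hne]; omega, ?_⟩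
  rw [card_rootedSubtrees, hpair, prod_pair hne, pow_succ, pow_add]
  have := Nat.one_le_two_pow (n := k₁)
  have := Nat.one_le_two_pow (n := k₂)
  nlinarith

lemma card_rootedSubtrees_le_three_mul_two_pow
    (hbin : ∀ x, #(hT.children r x) = 0 ∨ #(hT.children r x) = 2)
    (hlevel : ∀ l, 1 ≤ l → #{x | T.dist r x = l} ≤ 2) (v : V) :
    ∃ k, #(hT.descendants r v) = 2 * k + 1 ∧ #(hT.rootedSubtrees r v) + 2 ≤ 3 * 2 ^ k := by
  induction v using hT.induction_children (r := r) with | h v ih => ?_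
  rcases hbin v with h0 | h2
  · rw [card_eq_zero] at h0
    exact ⟨0, hT.card_descendants_of_children_eq_empty h0,
      by simp [hT.card_rootedSubtrees_of_children_eq_empty h0]⟩
  obtain ⟨w₁, w₂, hne, hpair⟩ := card_eq_two.1 h2
  have hw₁ : w₁ ∈ hT.children r v := by rw [hpair]; exact mem_insert_self _ _
  have hw₂ : w₂ ∈ hT.children r v := by rw [hpair]; exact mem_insert_of_mem (mem_singleton_self _)
  -- four grandchildren would not fit into the level below the children
  have hleaf : ∃ a b, a ≠ b ∧ hT.children r v = {a, b} ∧ hT.children r a = ∅ := by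
    have := hT.card_children_add_card_children_le hw₁ hw₂ hne
    have := hlevel (T.dist r v + 2) (by omega)
    rcases hbin w₁ with h₁ | h₁
    · exact ⟨w₁, w₂, hne, hpair, card_eq_zero.1 h₁⟩
    rcases hbin w₂ with h₂ | h₂
    · exact ⟨w₂, w₁, hne.symm, hpair.trans (pair_comm _ _), card_eq_zero.1 h₂⟩
    omega
  obtain ⟨a, b, hab, hpair, ha⟩ := hleaf
  obtain ⟨k, hk, hc⟩ := ih b (by rw [hpair]; exact mem_insert_of_mem (mem_singleton_self _))
  refine ⟨k + 1, ?_, ?_⟩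
  · rw [card_descendants, hpair, sum_pair hab, hT.card_descendants_of_children_eq_empty ha]
    omega
  · rw [card_rootedSubtrees, hpair, prod_pair hab, hT.card_rootedSubtrees_of_children_eq_empty ha,
      pow_succ]
    omega

end SimpleGraph.IsTree

lemma IsRootedBinaryTree.card_children_eq_zero_or_two {V : Type*} [Fintype V] [DecidableEq V]
    {T : SimpleGraph V} [DecidableRel T.Adj] {r : V} (h : IsRootedBinaryTree T r) (x : V) :
    #(h.1.children r x) = 0 ∨ #(h.1.children r x) = 2 := by
  obtain ⟨hT, hroot, hdeg⟩ := h
  by_cases hx : x = r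
  · subst hx
    rw [hT.card_children_self]
    refine hroot.imp_left fun h1 => ?_
    have := Fintype.card_le_one_iff_subsingleton.1 h1.le
    exact degree_eq_zero_of_subsingleton x
  · have := hT.card_children_add_one hx
    have := hdeg x hx
    omega

/-- Among all rooted binary trees on `n` vertices, the tree `T_{r,2}^n` having exactly two
vertices at every level `≥ 1` minimizes the number of subtrees containing the root. -/
theorem two_per_level_minimizes_root_subtrees {V₁ V₂ : Type*} [Fintype V₁] [Fintype V₂]
    (G₁ : SimpleGraph V₁) (G₂ : SimpleGraph V₂) [DecidableRel G₁.Adj] [DecidableRel G₂.Adj]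
    (r₁ : V₁) (r₂ : V₂)
    (h₁ : IsRootedBinaryTree G₁ r₁) (h₂ : IsRootedBinaryTree G₂ r₂)
    (hcard : Fintype.card V₁ = Fintype.card V₂)
    (hlevels : ∀ l : ℕ, 1 ≤ l → l ≤ treeHeight G₁ r₁ →
      (Finset.univ.filter (fun v => G₁.dist r₁ v = l)).card = 2) :
    numSubtrees G₁ r₁ ≤ numSubtrees G₂ r₂ := by
  classical
  have hlevel : ∀ l, 1 ≤ l → #{x | G₁.dist r₁ x = l} ≤ 2 := by
    intro l hl
    by_cases hle : l ≤ treeHeight G₁ r₁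
    · exact (hlevels l hl hle).le
    · rw [filter_false_of_mem fun x _ (hx : G₁.dist r₁ x = l) => hle (hx ▸ le_sup (mem_univ x)),
        card_empty]
      omega
  obtain ⟨k₁, hk₁, hup⟩ := h₁.1.card_rootedSubtrees_le_three_mul_two_pow
    h₁.card_children_eq_zero_or_two hlevel r₁
  obtain ⟨k₂, hk₂, hlow⟩ := h₂.1.three_mul_two_pow_le_card_rootedSubtrees
    h₂.card_children_eq_zero_or_two r₂
  rw [IsTree.descendants_self_eq_univ, card_univ] at hk₁ hk₂
  obtain rfl : k₁ = k₂ := by omega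
  rw [h₁.1.numSubtrees_eq_card_rootedSubtrees, h₂.1.numSubtrees_eq_card_rootedSubtrees]
  omega
end
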